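/- arXiv:1207.7344 — 5 statements merged into one kernel-verified Lean document; each statement's English description precedes it below -/
import Mathlib

section
/- For every natural number m and every integer i with 1 ≤ i ≤ m, the polynomial (1+x)^{m−i} divides T^i((1+x)^m) in ℚ[x], but (1+x)^{m−i+1} does not divide T^i((1+x)^m); that is, the highest power of (1+x) dividing T^i((1+x)^m) is exactly m−i. -/
open Polynomial

/-- The operator `T p = x · p'` on `ℚ[x]`. -/
noncomputable def T : Polynomial ℚ → Polynomial ℚ := fun p => X * derivative p

lemma key (m : ℕ) : ∀ i ≤ m, ∃ q : Polynomial ℚ,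
    T^[i] ((1 + X) ^ m) = (1 + X) ^ (m - i) * q ∧ q.eval (-1) ≠ 0 := by
  intro i
  induction i with
  | zero => intro _; exact ⟨1, by simp, by norm_num⟩
  | succ i ih =>
    intro hi
    obtain ⟨q, hq, hne⟩ := ih (Nat.le_of_succ_le hi)
    have hk : m - i = (m - (i + 1)) + 1 := by omega
    refine ⟨X * (C ((m - (i+1) : ℕ) + 1 : ℚ) * q + (1 + X) * derivative q), ?_, ?_⟩
    · rw [Function.iterate_succ_apply', hq, T]
      rw [derivative_mul, derivative_pow]
      have h1 : derivative (1 + X : Polynomial ℚ) = 1 := by simp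
      rw [h1, hk]
      have hc : ((m - (i+1) + 1 : ℕ) : ℚ) = ((m - (i+1) : ℕ) + 1 : ℚ) := by push_cast; ring
      simp only [Nat.add_sub_cancel, hc]
      ring
    · have hpos : ((m - (i+1) : ℕ) + 1 : ℚ) ≠ 0 := by positivity
      intro h
      apply hne
      simp only [eval_mul, eval_add, eval_C, eval_X, eval_one,
        show (1:ℚ)+(-1)=0 by norm_num, zero_mul, add_zero, neg_mul, one_mul,
        neg_eq_zero, mul_eq_zero] at h
      tauto

/-- For every natural number `m` and every `i` with `1 ≤ i ≤ m`, the polynomial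
`(1+x)^{m−i}` divides `T^i((1+x)^m)` in `ℚ[x]`, but `(1+x)^{m−i+1}` does not. -/
theorem stmt2 (m i : ℕ) (hi1 : 1 ≤ i) (him : i ≤ m) :
    (1 + X) ^ (m - i) ∣ T^[i] ((1 + X) ^ m) ∧
      ¬ ((1 + X) ^ (m - i + 1) ∣ T^[i] ((1 + X) ^ m)) := by
  obtain ⟨q, hq, hne⟩ := key m i him
  constructor
  · exact ⟨q, hq⟩
  · rintro ⟨r, hr⟩
    rw [hq, pow_succ] at hr
    have hX : (1 + X : Polynomial ℚ) ^ (m - i) ≠ 0 := by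
      apply pow_ne_zero
      intro h
      have := congrArg (eval 0) h
      simp at this
    have h2 : q = (1 + X) * r := by
      apply mul_left_cancel₀ hX
      rw [hr, mul_assoc]
    apply hne
    rw [h2]
    simp
end

section
/- Let n ≥ 3 be an integer and set t = ⌊n/2⌋. Suppose β_1, β_2, β_4, …, β_{2t} are rational numbers such that β_1·k + Σ_{i=1}^{t} β_{2i}·k^{2i} = 0 for every integer k with 1 ≤ k ≤ n−1. Then β_1 = 0 and β_{2i} = 0 for every i with 1 ≤ i ≤ t. -/
open Polynomial Finset

/-- Let `n ≥ 3` and `t = ⌊n/2⌋`.  If rational numbers `β₁, β₂, β₄, …, β_{2t}` satisfy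
`β₁·k + Σ_{i=1}^{t} β_{2i}·k^{2i} = 0` for every integer `1 ≤ k ≤ n−1`, then `β₁ = 0`
and `β_{2i} = 0` for every `1 ≤ i ≤ t`. -/
theorem stmt3 (n : ℕ) (hn : 3 ≤ n) (β₁ : ℚ) (β : ℕ → ℚ)
    (h : ∀ k : ℕ, 1 ≤ k → k ≤ n - 1 →
      β₁ * (k : ℚ) + ∑ i ∈ Finset.Icc 1 (n / 2), β (2 * i) * (k : ℚ) ^ (2 * i) = 0) :
    β₁ = 0 ∧ ∀ i : ℕ, 1 ≤ i → i ≤ n / 2 → β (2 * i) = 0 := by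
  set t := n / 2 with ht
  set P : Polynomial ℚ := C β₁ * X + ∑ i ∈ Finset.Icc 1 t, C (β (2 * i)) * X ^ (2 * i)
    with hPdef
  -- evaluation
  have heval : ∀ k : ℕ, k ∈ Finset.range n → P.eval (k : ℚ) = 0 := by
    intro k hk
    rw [Finset.mem_range] at hk
    rcases Nat.eq_zero_or_pos k with rfl | hk1
    · simp only [hPdef, Nat.cast_zero, eval_add, eval_mul, eval_C, eval_X, mul_zero,
        eval_finset_sum, zero_add]
      apply Finset.sum_eq_zero
      intro i hi
      rw [Finset.mem_Icc] at hi
      simp [zero_pow (by omega : 2 * i ≠ 0)]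
    · have := h k hk1 (by omega)
      simpa [hPdef, eval_finset_sum] using this
  -- coefficients of P
  have hcoeff : ∀ c : ℕ, P.coeff c =
      (if c = 1 then β₁ else 0) +
        ∑ i ∈ Finset.Icc 1 t, (if c = 2 * i then β (2 * i) else 0) := by
    intro c
    simp [hPdef, finset_sum_coeff, coeff_X, coeff_X_pow, eq_comm]
  -- degree bound
  have hdeg : P.natDegree ≤ n := by
    apply (natDegree_add_le _ _).trans
    simp only [max_le_iff]
    constructor
    · calc (C β₁ * X).natDegree ≤ X.natDegree := natDegree_C_mul_le _ _
        _ ≤ n := by simp; omega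
    · apply natDegree_sum_le_of_forall_le
      intro i hi
      calc (C (β (2*i)) * X ^ (2*i)).natDegree ≤ (X ^ (2*i) : ℚ[X]).natDegree :=
            natDegree_C_mul_le _ _
        _ ≤ n := by rw [natDegree_X_pow]; rw [Finset.mem_Icc] at hi; omega
  -- P = 0
  have hP0 : P = 0 := by
    by_contra hP0
    -- the multiset of roots 0, 1, ..., n-1
    set m : Multiset ℚ := (Finset.range n).val.map (fun k : ℕ => (k : ℚ)) with hm
    have hmcard : Multiset.card m = n := by simp [hm]
    have hmnodup : m.Nodup := by
      rw [hm]
      exact (Finset.range n).nodup.map Nat.cast_injective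
    have hmle : m ≤ P.roots := by
      rw [Multiset.le_iff_subset hmnodup]
      intro x hx
      rw [hm, Multiset.mem_map] at hx
      obtain ⟨k, hk, rfl⟩ := hx
      rw [mem_roots hP0]
      exact heval k hk
    obtain ⟨Q, hPQ⟩ : (m.map fun a => X - C a).prod ∣ P :=
      (Multiset.prod_X_sub_C_dvd_iff_le_roots hP0 m).mpr hmle
    have hZmonic : ((m.map fun a => X - C a).prod).Monic :=
      monic_multiset_prod_of_monic _ _ fun a _ => monic_X_sub_C a
    have hZdeg : ((m.map fun a => X - C a).prod).natDegree = n := by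
      rw [natDegree_multiset_prod_X_sub_C_eq_card, hmcard]
    have hQ0 : Q ≠ 0 := by rintro rfl; rw [mul_zero] at hPQ; exact hP0 hPQ
    have hQdeg : Q.natDegree = 0 := by
      have := natDegree_mul hZmonic.ne_zero hQ0
      rw [← hPQ, hZdeg] at this
      omega
    obtain ⟨c, hc⟩ := natDegree_eq_zero.mp hQdeg
    have hcne : c ≠ 0 := by rintro rfl; exact hQ0 (by rw [← hc, map_zero])
    -- compare coeff (n-1)
    have hmsum : m.sum = ∑ k ∈ Finset.range n, (k : ℚ) := by
      simp [hm, Finset.sum]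
    have hsumpos : (0 : ℚ) < m.sum := by
      rw [hmsum]
      apply Finset.sum_pos' (fun i _ => by positivity)
      exact ⟨1, Finset.mem_range.mpr (by omega), by norm_num⟩
    have hZcoeff : ((m.map fun a => X - C a).prod).coeff (n - 1) = -m.sum := by
      have := multiset_prod_X_sub_C_coeff_card_pred m (by rw [hmcard]; omega)
      rwa [hmcard] at this
    have hPcoeff : P.coeff (n - 1) = -m.sum * c := by
      rw [hPQ, ← hc, coeff_mul_C, hZcoeff]
    -- case n even: coeff (n-1) of P is zero since n-1 is odd ≥ 3
    rcases Nat.even_or_odd n with hne | hno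
    · have : P.coeff (n - 1) = 0 := by
        rw [hcoeff]
        rw [if_neg (by omega)]
        rw [Finset.sum_eq_zero, add_zero]
        intro i hi
        rw [if_neg]
        rcases hne with ⟨j, hj⟩
        omega
      rw [this] at hPcoeff
      have : m.sum = 0 ∨ c = 0 := by
        rcases mul_eq_zero.mp hPcoeff.symm with h' | h'
        · left; linarith [neg_eq_zero.mp h']
        · right; exact h'
      rcases this with h' | h'
      · linarith
      · exact hcne h'
    · -- n odd: degree < n
      obtain ⟨j, hj⟩ := hno
      have hdeg' : P.natDegree < n := by
        have h2t : 2 * t ≤ n - 1 := by omega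
        have : P.natDegree ≤ n - 1 := by
          apply (natDegree_add_le _ _).trans
          simp only [max_le_iff]
          constructor
          · calc (C β₁ * X).natDegree ≤ X.natDegree := natDegree_C_mul_le _ _
              _ ≤ n - 1 := by simp; omega
          · apply natDegree_sum_le_of_forall_le
            intro i hi
            calc (C (β (2*i)) * X ^ (2*i)).natDegree ≤ (X ^ (2*i) : ℚ[X]).natDegree :=
                  natDegree_C_mul_le _ _
              _ ≤ n - 1 := by rw [natDegree_X_pow]; rw [Finset.mem_Icc] at hi; omega
        omega
      apply hP0
      apply eq_zero_of_natDegree_lt_card_of_eval_eq_zero' P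
        ((Finset.range n).image (fun k : ℕ => (k : ℚ)))
      · intro x hx
        obtain ⟨k, hk, rfl⟩ := Finset.mem_image.mp hx
        exact heval k hk
      · rwa [Finset.card_image_of_injective _ Nat.cast_injective, Finset.card_range]
  -- conclude
  constructor
  · have := hcoeff 1
    rw [hP0] at this
    simp only [coeff_zero, if_pos rfl] at this
    rw [Finset.sum_eq_zero (fun i hi => by rw [if_neg]; rw [Finset.mem_Icc] at hi; omega),
      add_zero] at this
    exact this.symm
  · intro i h1 h2
    have := hcoeff (2 * i)
    rw [hP0] at this
    simp only [coeff_zero, if_neg (by omega : ¬ 2 * i = 1)] at this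
    rw [Finset.sum_eq_single i (fun j hj hne => by rw [if_neg (by omega)])
      (fun hni => absurd (Finset.mem_Icc.mpr ⟨h1, h2⟩) hni), if_pos rfl] at this
    rw [zero_add] at this
    exact this.symm
end

section
/- Let m, n, t be integers with m > n ≥ 1, t ≥ 1 and 2t < m, and let a, β_1, β_2, β_4, …, β_{2t} be rational numbers. If β_1·T((1+x)^m) + Σ_{i=1}^{t} β_{2i}·T^{2i}((1+x)^m) + a·x^n·(1+x)^{m−n} = 0 in ℚ[x], then β_{2i} = 0 for every i with 2i > n. -/
/-!
The coefficient of `x^j` in `T^k((1+x)^m)` is `j^k·C(m,j)`, and that of `x^n(1+x)^(m-n)` is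
`C(m,j)·j(j-1)⋯(j-n+1) / m(m-1)⋯(m-n+1)`. So, coefficientwise, the hypothesis says
`C(m,j)·P(j) = 0` for every `j`, where
`P = β₁x + Σ β_{2i} x^{2i} + (a / m(m-1)⋯(m-n+1))·x(x-1)⋯(x-n+1)`.
Since `deg P ≤ m` and `P` vanishes at `0, …, m`, `P = 0`; the falling factorial has degree `n`,
so for `2i > n` the coefficient of `x^{2i}` in `P` is `β_{2i}` alone.
-/

open Polynomial

lemma coeff_T (p : ℚ[X]) (j : ℕ) : (T p).coeff j = j * p.coeff j := by
  cases j with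
  | zero => simp [T]
  | succ j => simp [T, coeff_derivative, mul_comm]

lemma coeff_iterate_T (k : ℕ) (p : ℚ[X]) (j : ℕ) :
    (T^[k] p).coeff j = (j : ℚ) ^ k * p.coeff j := by
  induction k with
  | zero => simp
  | succ k ih => rw [Function.iterate_succ_apply', coeff_T, ih, pow_succ', mul_assoc]

lemma Nat.choose_mul_descFactorial {m n j : ℕ} (hnj : n ≤ j) :
    m.choose j * j.descFactorial n = m.descFactorial n * (m - n).choose (j - n) := by
  rw [descFactorial_eq_factorial_mul_choose, descFactorial_eq_factorial_mul_choose,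
    mul_left_comm, Nat.choose_mul hnj, mul_assoc]

lemma coeff_X_pow_mul_one_add_X_pow {n m : ℕ} (hnm : n ≤ m) (j : ℕ) :
    (X ^ n * (1 + X) ^ (m - n) : ℚ[X]).coeff j
      = m.choose j * (descPochhammer ℚ n).eval (j : ℚ) / m.descFactorial n := by
  have hm : (m.descFactorial n : ℚ) ≠ 0 := by
    exact_mod_cast (Nat.descFactorial_pos.2 hnm).ne'
  rw [descPochhammer_eval_eq_descFactorial, coeff_X_pow_mul', eq_div_iff hm]
  split_ifs with hnj
  · rw [coeff_one_add_X_pow]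
    exact_mod_cast ((Nat.choose_mul_descFactorial hnj).trans (mul_comm _ _)).symm
  · simp [Nat.descFactorial_eq_zero_iff_lt.2 (not_le.1 hnj)]

lemma eq_zero_of_natDegree_le_of_eval_natCast_eq_zero {R : Type*} [CommRing R] [IsDomain R]
    [CharZero R] {p : R[X]} {m : ℕ} (hdeg : p.natDegree ≤ m)
    (heval : ∀ j ≤ m, p.eval (j : R) = 0) : p = 0 :=
  eq_zero_of_natDegree_lt_card_of_eval_eq_zero p (f := fun j : Fin (m + 1) => ((j : ℕ) : R))
    (Nat.cast_injective.comp Fin.val_injective) (fun j => heval j (Nat.lt_succ_iff.1 j.2))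
    (by simpa using Nat.lt_succ_of_le hdeg)

theorem stmt4_general (m n t : ℕ) (hmn : n < m) (htm : 2 * t < m)
    (a β₁ : ℚ) (β : ℕ → ℚ)
    (h : C β₁ * T^[1] ((1 + X) ^ m)
        + ∑ i ∈ Finset.Icc 1 t, C (β (2 * i)) * T^[2 * i] ((1 + X) ^ m)
        + C a * X ^ n * (1 + X) ^ (m - n) = 0) :
    ∀ i : ℕ, 1 ≤ i → i ≤ t → n < 2 * i → β (2 * i) = 0 := by
  set P : ℚ[X] := C β₁ * X + ∑ i ∈ Finset.Icc 1 t, C (β (2 * i)) * X ^ (2 * i)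
    + C (a / m.descFactorial n) * descPochhammer ℚ n
  have hcoeff (j : ℕ) : P.eval (j : ℚ) * m.choose j = 0 := by
    rw [← coeff_zero j, ← h]
    simp only [P, mul_assoc, coeff_add, finsetSum_coeff, coeff_C_mul, coeff_iterate_T,
      coeff_one_add_X_pow, coeff_X_pow_mul_one_add_X_pow hmn.le, eval_add, eval_mul, eval_C,
      eval_X, eval_pow, eval_finsetSum]
    rw [add_mul, add_mul, Finset.sum_mul]
    ring_nf
  have hdeg : P.natDegree ≤ m := by
    refine natDegree_add_le_of_degree_le (natDegree_add_le_of_degree_le ?_ ?_) ?_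
    · exact (natDegree_C_mul_le _ _).trans (natDegree_X_le.trans (by omega))
    · refine natDegree_sum_le_of_forall_le _ _ fun i hi => ?_
      have := (Finset.mem_Icc.1 hi).2
      exact (natDegree_C_mul_X_pow_le _ _).trans (by omega)
    · exact (natDegree_C_mul_le _ _).trans ((descPochhammer_natDegree ℚ n).le.trans hmn.le)
  have hP : P = 0 := eq_zero_of_natDegree_le_of_eval_natCast_eq_zero hdeg fun j hj =>
    (mul_eq_zero.1 (hcoeff j)).resolve_right (by exact_mod_cast (Nat.choose_pos hj).ne')
  intro i hi hit hni
  have hpoch : (descPochhammer ℚ n).coeff (2 * i) = 0 :=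
    coeff_eq_zero_of_natDegree_lt ((descPochhammer_natDegree ℚ n).trans_lt hni)
  simpa [P, coeff_X, hpoch, hi, hit, show 1 ≠ 2 * i by omega] using congrArg (coeff · (2 * i)) hP

/-- Let `m > n ≥ 1`, `t ≥ 1`, `2t < m`, and let `a, β₁, β₂, β₄, …, β_{2t}` be rationals.
If `β₁·T((1+x)^m) + Σ_{i=1}^{t} β_{2i}·T^{2i}((1+x)^m) + a·x^n·(1+x)^{m−n} = 0` in `ℚ[x]`,
then `β_{2i} = 0` for every `i` with `2i > n`. -/
theorem stmt4 (m n t : ℕ) (hmn : n < m) (hn : 1 ≤ n) (ht : 1 ≤ t) (htm : 2 * t < m)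
    (a β₁ : ℚ) (β : ℕ → ℚ)
    (h : C β₁ * T^[1] ((1 + X) ^ m)
        + ∑ i ∈ Finset.Icc 1 t, C (β (2 * i)) * T^[2 * i] ((1 + X) ^ m)
        + C a * X ^ n * (1 + X) ^ (m - n) = 0) :
    ∀ i : ℕ, 1 ≤ i → i ≤ t → n < 2 * i → β (2 * i) = 0 :=
  stmt4_general m n t hmn htm a β₁ β h
end

section
/- Let n ≥ 3 and g ≥ 1 be integers, and let m be any integer with m > n and m > 2g+2. Then there exist rational numbers q_1, …, q_m satisfying all of the following: (i) Σ_{k=1}^{m} C(m,k)·k·q_k = 0; (ii) for every even integer i with 0 ≤ i ≤ g−1, Σ_{k=1}^{m} C(m,k)·k^{2+i}·q_k = 0; and (iii) Σ_{i=0}^{m−n} C(m−n,i)·q_{n+i} ≠ 0. -/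
open Polynomial

lemma descPoch_coeff_sign (n : ℕ) : ∀ j : ℕ, 1 ≤ j → j ≤ n →
    0 < (-1:ℚ)^(n-j) * (descPochhammer ℚ n).coeff j := by
  induction n with
  | zero => intro j h1 h2; omega
  | succ n ih =>
    intro j h1 h2
    have hco : (descPochhammer ℚ (n+1)).coeff j
        = (descPochhammer ℚ n).coeff (j-1) - n * (descPochhammer ℚ n).coeff j := by
      obtain ⟨j', rfl⟩ : ∃ j', j = j' + 1 := ⟨j - 1, by omega⟩
      rw [descPochhammer_succ_right, mul_sub, coeff_sub, coeff_mul_X,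
        ← C_eq_natCast, coeff_mul_C]
      simp [mul_comm]
    rcases eq_or_lt_of_le h2 with rfl | hlt
    · -- j = n+1
      have h0 : (descPochhammer ℚ n).coeff n = 1 := by
        have := (monic_descPochhammer ℚ n).coeff_natDegree
        rwa [descPochhammer_natDegree] at this
      have h1' : (descPochhammer ℚ n).coeff (n+1) = 0 :=
        coeff_eq_zero_of_natDegree_lt (by rw [descPochhammer_natDegree]; omega)
      rw [hco]
      simp [h0, h1']
    · have hjn : j ≤ n := by omega
      rcases eq_or_lt_of_le h1 with rfl | hj2
      · -- j = 1
        have hn1 : 1 ≤ n := hjn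
        have hc0 : (descPochhammer ℚ n).coeff 0 = 0 := by
          rw [coeff_zero_eq_eval_zero]
          exact descPochhammer_ne_zero_eval_zero ℚ (Nat.one_le_iff_ne_zero.mp hn1)
        have hih := ih 1 le_rfl hjn
        rw [hco]
        simp only [Nat.sub_self, hc0, zero_sub]
        have he : n + 1 - 1 = (n - 1) + 1 := by omega
        rw [he, pow_succ]
        have hn0 : (0:ℚ) < n := Nat.cast_pos.mpr hn1
        nlinarith [hih, mul_pos hn0 hih]
      · -- 2 ≤ j ≤ n
        have hih1 := ih (j-1) (by omega) (by omega)
        have hih2 := ih j h1 hjn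
        rw [hco]
        have he1 : n + 1 - j = (n - j) + 1 := by omega
        have he2 : n - (j-1) = (n - j) + 1 := by omega
        rw [he2] at hih1
        rw [pow_succ] at hih1
        rw [he1, pow_succ]
        have hn0 : (0:ℚ) ≤ n := by positivity
        nlinarith [hih1, hih2, mul_nonneg hn0 hih2.le]

lemma lag_key (m : ℕ) (p : Polynomial ℚ) (hdeg : p.degree < (m : ℕ)) :
    ∑ k ∈ Finset.Icc 1 m, p.eval (k:ℚ) *
      (Lagrange.basis (Finset.Icc 1 m) (fun j : ℕ => (j:ℚ)) k).coeff 3 = p.coeff 3 := by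
  have hinj : Set.InjOn (fun j : ℕ => (j:ℚ)) (Finset.Icc 1 m) :=
    fun a _ b _ h => Nat.cast_injective h
  have hcard : (Finset.Icc 1 m).card = m := by simp
  have h := Lagrange.eq_interpolate (v := fun j : ℕ => (j:ℚ)) (f := p) hinj
    (by rw [hcard]; exact hdeg)
  conv_rhs => rw [h]
  rw [Lagrange.interpolate_apply, Polynomial.finset_sum_coeff]
  exact Finset.sum_congr rfl fun k hk => by rw [Polynomial.coeff_C_mul]

lemma nat_id (n m i : ℕ) (h : n + i ≤ m) :
    (m-n).choose i * m.factorial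
      = (m-n).factorial * ((n+i).descFactorial n * m.choose (n+i)) := by
  have h1 := Nat.choose_mul_factorial_mul_factorial h
  have h2 := Nat.choose_mul_factorial_mul_factorial (show i ≤ m - n by omega)
  have h3 := Nat.factorial_mul_descFactorial (show n ≤ n + i by omega)
  have h4 : n + i - n = i := by omega
  rw [h4] at h3
  have h5 : m - (n+i) = (m-n) - i := by omega
  calc (m-n).choose i * m.factorial
      = (m-n).choose i * (m.choose (n+i) * (n+i).factorial * (m-(n+i)).factorial) := by
        rw [h1]
    _ = ((m-n).choose i * i.factorial * ((m-n)-i).factorial)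
        * ((n+i).descFactorial n * m.choose (n+i)) := by
        rw [← h3, h5]; ring
    _ = (m-n).factorial * ((n+i).descFactorial n * m.choose (n+i)) := by rw [h2]

/-- Let `n ≥ 3`, `g ≥ 1` and let `m > n` with `m > 2g+2`.  Then there exist rationals
`q₁, …, q_m` with (i) `Σ_{k=1}^{m} C(m,k)·k·q_k = 0`; (ii) for every even `0 ≤ i ≤ g−1`,
`Σ_{k=1}^{m} C(m,k)·k^{2+i}·q_k = 0`; and (iii) `Σ_{i=0}^{m−n} C(m−n,i)·q_{n+i} ≠ 0`. -/
theorem stmt6 (n g m : ℕ) (hn : 3 ≤ n) (hg : 1 ≤ g) (hmn : n < m) (hmg : 2 * g + 2 < m) :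
    ∃ q : ℕ → ℚ,
      (∑ k ∈ Finset.Icc 1 m, (m.choose k : ℚ) * (k : ℚ) * q k = 0) ∧
      (∀ i : ℕ, i ≤ g - 1 → Even i →
        ∑ k ∈ Finset.Icc 1 m, (m.choose k : ℚ) * (k : ℚ) ^ (2 + i) * q k = 0) ∧
      (∑ i ∈ Finset.range (m - n + 1), ((m - n).choose i : ℚ) * q (n + i) ≠ 0) := by
  classical
  set q : ℕ → ℚ := fun k =>
    (Lagrange.basis (Finset.Icc 1 m) (fun j : ℕ => (j:ℚ)) k).coeff 3 / (m.choose k) with hq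
  have hqc : ∀ k ∈ Finset.Icc 1 m, (m.choose k : ℚ) * q k
      = (Lagrange.basis (Finset.Icc 1 m) (fun j : ℕ => (j:ℚ)) k).coeff 3 := by
    intro k hk
    have hk' := Finset.mem_Icc.mp hk
    have hne : (m.choose k : ℚ) ≠ 0 := by
      exact_mod_cast (Nat.choose_pos hk'.2).ne'
    rw [hq]
    field_simp
  refine ⟨q, ?_, ?_, ?_⟩
  · -- (i)
    have h := lag_key m X (by rw [degree_X]; exact_mod_cast (by omega : 1 < m))
    rw [coeff_X, if_neg (by norm_num)] at h
    rw [← h]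
    refine Finset.sum_congr rfl fun k hk => ?_
    rw [eval_X, mul_right_comm, hqc k hk, mul_comm]
  · -- (ii)
    intro i hi hieven
    have hdeg : ((X : ℚ[X]) ^ (2+i)).degree < (m : ℕ) := by
      rw [degree_X_pow]
      exact_mod_cast (by omega : 2 + i < m)
    have h := lag_key m (X ^ (2+i)) hdeg
    have h3 : (3:ℕ) ≠ 2 + i := by
      intro hh
      have : i = 1 := by omega
      rw [this] at hieven
      exact (Nat.not_even_iff.mpr rfl) hieven
    rw [coeff_X_pow, if_neg h3] at h
    rw [← h]
    refine Finset.sum_congr rfl fun k hk => ?_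
    rw [eval_pow, eval_X, mul_right_comm, hqc k hk, mul_comm]
  · -- (iii)
    have hm0 : (m.factorial : ℚ) ≠ 0 := by exact_mod_cast (Nat.factorial_pos m).ne'
    set p : ℚ[X] := descPochhammer ℚ n with hp
    have hpd : p.degree < (m : ℕ) := by
      rw [hp, degree_eq_natDegree (monic_descPochhammer ℚ n).ne_zero,
        descPochhammer_natDegree]
      exact_mod_cast hmn
    have hkey := lag_key m p hpd
    set c : ℚ := ((m-n).factorial : ℚ) / (m.factorial : ℚ) with hc
    have hc0 : c ≠ 0 := by
      rw [hc]
      positivity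
    have hmain : ∑ i ∈ Finset.range (m - n + 1), ((m - n).choose i : ℚ) * q (n + i)
        = c * ∑ k ∈ Finset.Icc 1 m, p.eval (k:ℚ) *
            ((m.choose k : ℚ) * q k) := by
      rw [Finset.mul_sum]
      have hsub : Finset.Icc n m ⊆ Finset.Icc 1 m := by
        apply Finset.Icc_subset_Icc (by omega) le_rfl
      rw [← Finset.sum_subset hsub]
      · rw [← Finset.Ico_add_one_right_eq_Icc, Finset.sum_Ico_eq_sum_range]
        have hrange : m + 1 - n = m - n + 1 := by omega
        rw [hrange]
        refine Finset.sum_congr rfl fun i hi => ?_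
        have hi' : i ≤ m - n := by
          have := Finset.mem_range.mp hi; omega
        have hle : n + i ≤ m := by omega
        have hev : p.eval ((n+i : ℕ) : ℚ) = ((n+i).descFactorial n : ℚ) := by
          rw [hp, descPochhammer_eval_eq_descFactorial]
        have hid := nat_id n m i hle
        have hidq : ((m-n).choose i : ℚ) * m.factorial
            = ((m-n).factorial : ℚ) * (((n+i).descFactorial n : ℚ) * (m.choose (n+i) : ℚ)) := by
          exact_mod_cast congrArg (Nat.cast : ℕ → ℚ) hid
        have : ((m-n).choose i : ℚ)
            = c * (((n+i).descFactorial n : ℚ) * (m.choose (n+i) : ℚ)) := by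
          rw [hc]
          field_simp
          linarith [hidq]
        rw [Nat.cast_add] at hev ⊢
        rw [hev] at *
        rw [this]
        ring
      · intro k hk hnk
        have hk1 := Finset.mem_Icc.mp hk
        have hklt : k < n := by
          rcases Finset.mem_Icc.mp hk with ⟨ha, hb⟩
          by_contra hcon
          exact hnk (Finset.mem_Icc.mpr ⟨by omega, hb⟩)
        have : p.eval (k:ℚ) = 0 := by
          rw [hp, descPochhammer_eval_eq_descFactorial]
          exact_mod_cast Nat.descFactorial_eq_zero_iff_lt.mpr hklt
        rw [this]
        ring
    rw [hmain]
    have hsum : ∑ k ∈ Finset.Icc 1 m, p.eval (k:ℚ) * ((m.choose k : ℚ) * q k)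
        = p.coeff 3 := by
      rw [← hkey]
      exact Finset.sum_congr rfl fun k hk => by rw [hqc k hk]
    rw [hsum]
    have hcoeff := descPoch_coeff_sign n 3 (by omega) hn
    rw [← hp] at hcoeff
    refine mul_ne_zero hc0 ?_
    intro h
    rw [h, mul_zero] at hcoeff
    exact lt_irrefl 0 hcoeff
end

section
/- Let n and i be integers with 1 ≤ i < n−3. Then for every integer N there exist an integer m with m ≥ N and m > n, and rational numbers q_1, …, q_m, such that: (i) Σ_{k=1}^{m} C(m,k)·k^j·q_k = 0 for every j ∈ {1, 2, …, n} \ {i}; and (ii) Σ_{l=1}^{n} C(n,l)·l^{i+3}·( Σ_{j=0}^{m−n} C(m−n,j)·q_{l+j} ) ≠ 0. -/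
/-!
Let `x` be the vector on `{1, …, n}` with `∑ₜ Q(t) xₜ = coeffᵢ Q` for every polynomial `Q` of
degree `≤ n` vanishing at `0` (its entries are `i`-th coefficients of Lagrange basis polynomials),
and take `q_k = x_k / C(m, k)`. Then (i) reads `coeffᵢ Xʲ = 0`. By the identity
`C(m,n) C(n,l) C(m-n,k-l) = C(m,k) C(k,l) C(m-k,n-l)`, the sum in (ii) is
`C(m,n)⁻¹ ∑ₖ x_k ∑ₗ lᵖ C(k,l) C(m-k,n-l)` with `p = i + 3`, a polynomial in `m` for `m ≥ n`.
At `m = n + 1` the inner sum is `(n+1-k) kᵖ + k (k-1)ᵖ`, a polynomial in `k` of degree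
`p + 1 ≤ n` whose `i`-th coefficient is `(-1)ᵖ⁻ⁱ⁺¹ C(p, i-1) ≠ 0`. So the polynomial in `m` is
nonzero, and it does not vanish at infinitely many integers `m`.
-/

open Finset Polynomial Filter

theorem Nat.choose_mul_choose_sub_comm (M a b : ℕ) :
    M.choose a * (M - a).choose b = M.choose b * (M - b).choose a := by
  have h := Nat.choose_mul (n := M) (Nat.le_add_right a b)
  have h' := Nat.choose_mul (n := M) (Nat.le_add_left b a)
  rw [Nat.add_sub_cancel_left] at h
  rw [Nat.add_sub_cancel] at h'
  rw [← h, ← h', Nat.choose_symm_add]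

theorem Nat.choose_mul_choose_mul_choose_sub {m n k l : ℕ} (hlk : l ≤ k) (hln : l ≤ n) :
    m.choose n * n.choose l * (m - n).choose (k - l) =
      m.choose k * k.choose l * (m - k).choose (n - l) := by
  rw [Nat.choose_mul hln, Nat.choose_mul hlk, mul_assoc, mul_assoc,
    show m - n = m - l - (n - l) by omega, show m - k = m - l - (k - l) by omega,
    Nat.choose_mul_choose_sub_comm]

/-- `C(m, n)` times the `p`-th moment of the number of marked points in a uniformly random
`n`-subset of an `m`-set with `k` marked points (the term `l = 0` vanishes for `p ≠ 0`). -/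
def hypergeomMoment (p n m k : ℕ) : ℕ :=
  ∑ l ∈ Icc 1 k, l ^ p * k.choose l * (m - k).choose (n - l)

theorem hypergeomMoment_succ_self {p n k : ℕ} (hp : p ≠ 0) (hk : 1 ≤ k) (hkn : k ≤ n) :
    hypergeomMoment p n (n + 1) k = (n + 1 - k) * k ^ p + k * (k - 1) ^ p := by
  obtain ⟨k, rfl⟩ : ∃ k', k = k' + 1 := ⟨k - 1, by omega⟩
  rw [hypergeomMoment, sum_eq_add k (k + 1) (by omega)]
  · rw [Nat.choose_succ_self_right, Nat.choose_self, show n + 1 - (k + 1) = n - k by omega,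
      Nat.choose_self, show n - (k + 1) = n - k - 1 by omega, Nat.choose_symm (by omega),
      Nat.choose_one_right, Nat.add_sub_cancel]
    ring
  · intro l hl hlk
    rw [Nat.choose_eq_zero_of_lt (n := n + 1 - (k + 1)) (by simp only [mem_Icc] at hl; omega),
      mul_zero]
  · intro hk
    rw [show k = 0 by simp only [mem_Icc] at hk; omega, zero_pow hp, zero_mul, zero_mul]
  · intro hk
    simp at hk

theorem sum_mul_sum_choose_mul_shift {R : Type*} [Semiring R] {n m : ℕ} (a q : ℕ → R)
    (hq : ∀ k, n < k → q k = 0) (hnm : 2 * n ≤ m + 1) :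
    ∑ l ∈ Icc 1 n, a l * ∑ j ∈ range (m - n + 1), ((m - n).choose j : R) * q (l + j) =
      ∑ k ∈ Icc 1 n, (∑ l ∈ Icc 1 k, a l * (m - n).choose (k - l)) * q k := by
  have inner : ∀ l ∈ Icc 1 n, ∑ j ∈ range (m - n + 1), ((m - n).choose j : R) * q (l + j) =
      ∑ k ∈ Icc l n, ((m - n).choose (k - l) : R) * q k := by
    intro l hl
    simp only [mem_Icc] at hl
    rw [sum_subset (s₁ := Icc l n) (s₂ := Ico l (l + (m - n + 1)))
      (fun k hk => by simp only [mem_Icc, mem_Ico] at hk ⊢; omega)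
      (fun k hk hk' => by
        rw [hq k (by simp only [mem_Icc, mem_Ico] at hk hk'; omega), mul_zero]),
      sum_Ico_eq_sum_range]
    simp only [Nat.add_sub_cancel_left]
  rw [sum_congr rfl fun l hl => by rw [inner l hl, mul_sum]]
  simp only [sum_mul, mul_assoc]
  exact sum_comm' fun l k => by simp only [mem_Icc]; omega

variable {K : Type*} [Field K] [CharZero K]

theorem exists_sum_eval_mul_eq_coeff (n i : ℕ) :
    ∃ x : ℕ → K, (∀ t, n < t → x t = 0) ∧ ∀ Q : K[X], Q.natDegree ≤ n → Q.eval 0 = 0 →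
      ∑ t ∈ Icc 1 n, Q.eval (t : K) * x t = Q.coeff i := by
  classical
  set s := range (n + 1)
  refine ⟨fun t => if t ≤ n then (Lagrange.basis s (Nat.cast : ℕ → K) t).coeff i else 0,
    fun t ht => if_neg (by omega), fun Q hQ hQ0 => ?_⟩
  have hdeg : Q.degree < #s := by
    rw [card_range]
    exact (degree_le_of_natDegree_le hQ).trans_lt (by exact_mod_cast n.lt_succ_self)
  conv_rhs => rw [Lagrange.eq_interpolate Nat.cast_injective.injOn hdeg,
    Lagrange.interpolate_apply, finsetSum_coeff]
  rw [sum_range_succ', Nat.cast_zero, hQ0, C_0, zero_mul, coeff_zero, add_zero,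
    ← Ico_add_one_right_eq_Icc, sum_Ico_eq_sum_range, Nat.add_sub_cancel]
  refine sum_congr rfl fun t ht => ?_
  dsimp only
  rw [add_comm 1 t, if_pos (by simp only [mem_range] at ht; omega), coeff_C_mul]

theorem exists_eval_natCast_eq_choose_sub (a b : ℕ) :
    ∃ P : K[X], ∀ m, a ≤ m → P.eval (m : K) = ((m - a).choose b : K) := by
  refine ⟨C ((b.factorial : K)⁻¹) * (descPochhammer K b).comp (X - C (a : K)), fun m hm => ?_⟩
  rw [eval_mul, eval_C, eval_comp, eval_sub, eval_X, eval_C, ← Nat.cast_sub hm,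
    descPochhammer_eval_eq_descFactorial, Nat.descFactorial_eq_factorial_mul_choose]
  push_cast
  exact inv_mul_cancel_left₀ (Nat.cast_ne_zero.2 b.factorial_ne_zero) _

theorem exists_eval_natCast_eq_hypergeomMoment (p n k : ℕ) :
    ∃ P : K[X], ∀ m, k ≤ m → P.eval (m : K) = hypergeomMoment p n m k := by
  choose Q hQ using exists_eval_natCast_eq_choose_sub (K := K) k
  refine ⟨∑ l ∈ Icc 1 k, C ((l ^ p * k.choose l : ℕ) : K) * Q (n - l), fun m hm => ?_⟩
  simp [hypergeomMoment, eval_finsetSum, hQ _ _ hm]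

theorem Polynomial.frequently_eval_natCast_ne_zero {P : K[X]} (hP : P ≠ 0) :
    ∃ᶠ m : ℕ in atTop, P.eval (m : K) ≠ 0 := by
  by_contra h
  have hroots : {m : ℕ | P.eval (m : K) = 0}.Infinite :=
    Nat.frequently_atTop_iff_infinite.1 (not_frequently.1 h |>.mono fun _ => not_not.1).frequently
  exact hP <| eq_zero_of_infinite_isRoot P <|
    (hroots.image Nat.cast_injective.injOn).mono (by rintro _ ⟨m, hm, rfl⟩; exact hm)

theorem sum_hypergeomMoment_succ_self_mul_ne_zero {x : ℕ → K} {n i p : ℕ}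
    (hx : ∀ Q : K[X], Q.natDegree ≤ n → Q.eval 0 = 0 →
      ∑ t ∈ Icc 1 n, Q.eval (t : K) * x t = Q.coeff i)
    (hi : 1 ≤ i) (hip : i < p) (hpn : p < n) :
    ∑ k ∈ Icc 1 n, (hypergeomMoment p n (n + 1) k : K) * x k ≠ 0 := by
  set Q : K[X] := (C ((n : K) + 1) - X) * X ^ p + X * (X - 1) ^ p
  have hQ : ∀ k ∈ Icc 1 n, (hypergeomMoment p n (n + 1) k : K) = Q.eval (k : K) := by
    intro k hk
    simp only [mem_Icc] at hk
    rw [hypergeomMoment_succ_self (by omega) hk.1 hk.2]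
    push_cast [Nat.cast_sub hk.1, show k ≤ n + 1 by omega]
    simp [Q]
  rw [sum_congr rfl fun k hk => by rw [hQ k hk], hx Q ?_ ?_]
  · obtain ⟨i, rfl⟩ : ∃ i', i = i' + 1 := ⟨i - 1, by omega⟩
    simp only [Q]
    rw [coeff_add, sub_mul, coeff_sub, coeff_C_mul_X_pow, ← pow_succ', coeff_X_pow,
      if_neg (by omega), if_neg (by omega), coeff_X_mul, sub_eq_add_neg X, ← C_1, ← C_neg,
      coeff_X_add_C_pow]
    simp [(Nat.choose_pos (by omega : i ≤ p)).ne']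
  · simp only [Q]
    compute_degree
    omega
  · simp [Q, zero_pow (show p ≠ 0 by omega)]

theorem frequently_sum_hypergeomMoment_mul_ne_zero {x : ℕ → K} {n i p : ℕ}
    (hx : ∀ Q : K[X], Q.natDegree ≤ n → Q.eval 0 = 0 →
      ∑ t ∈ Icc 1 n, Q.eval (t : K) * x t = Q.coeff i)
    (hi : 1 ≤ i) (hip : i < p) (hpn : p < n) :
    ∃ᶠ m in atTop, ∑ k ∈ Icc 1 n, (hypergeomMoment p n m k : K) * x k ≠ 0 := by
  choose P hP using exists_eval_natCast_eq_hypergeomMoment (K := K) p n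
  set F : K[X] := ∑ k ∈ Icc 1 n, P k * C (x k)
  have hF : ∀ m, n ≤ m →
      F.eval (m : K) = ∑ k ∈ Icc 1 n, (hypergeomMoment p n m k : K) * x k := by
    intro m hm
    simp only [F, eval_finsetSum, eval_mul, eval_C]
    exact sum_congr rfl fun k hk => by rw [hP k m ((mem_Icc.1 hk).2.trans hm)]
  have hF0 : F ≠ 0 := by
    intro h
    apply sum_hypergeomMoment_succ_self_mul_ne_zero hx hi hip hpn
    rw [← hF (n + 1) (by omega), h, eval_zero]
  refine ((frequently_eval_natCast_ne_zero hF0).and_eventually (eventually_ge_atTop n)).mono ?_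
  rintro m ⟨hm, hnm⟩
  rwa [← hF m hnm]

theorem sum_choose_mul_pow_mul_div_choose {n m : ℕ} (x : ℕ → K) (hx : ∀ t, n < t → x t = 0)
    (hnm : n ≤ m) (j : ℕ) :
    ∑ k ∈ Icc 1 m, (m.choose k : K) * (k : K) ^ j * (x k / m.choose k) =
      ∑ k ∈ Icc 1 n, (k : K) ^ j * x k := by
  rw [← sum_subset (Icc_subset_Icc_right hnm) fun k hk hk' => by
    rw [hx k (by simp only [mem_Icc] at hk hk'; omega), zero_div, mul_zero]]
  refine sum_congr rfl fun k hk => ?_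
  have : (m.choose k : K) ≠ 0 :=
    Nat.cast_ne_zero.2 (Nat.choose_pos ((mem_Icc.1 hk).2.trans hnm)).ne'
  field_simp

theorem sum_choose_mul_pow_mul_sum_choose_div_choose {n m : ℕ} (p : ℕ) (x : ℕ → K)
    (hx : ∀ t, n < t → x t = 0) (hnm : 2 * n ≤ m + 1) :
    ∑ l ∈ Icc 1 n, (n.choose l : K) * (l : K) ^ p *
        ∑ j ∈ range (m - n + 1), ((m - n).choose j : K) * (x (l + j) / m.choose (l + j)) =
      (∑ k ∈ Icc 1 n, (hypergeomMoment p n m k : K) * x k) / m.choose n := by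
  refine (sum_mul_sum_choose_mul_shift (fun l => (n.choose l : K) * (l : K) ^ p)
    (fun k => x k / m.choose k) (fun k hk => by rw [hx k hk, zero_div]) hnm).trans ?_
  rw [sum_div]
  refine sum_congr rfl fun k hk => ?_
  simp only [mem_Icc] at hk
  have hmn : (m.choose n : K) ≠ 0 := Nat.cast_ne_zero.2 (Nat.choose_pos (by omega)).ne'
  have hmk : (m.choose k : K) ≠ 0 := Nat.cast_ne_zero.2 (Nat.choose_pos (by omega)).ne'
  have key : (m.choose n : K) * ∑ l ∈ Icc 1 k, (n.choose l : K) * (l : K) ^ p *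
      (m - n).choose (k - l) = m.choose k * hypergeomMoment p n m k := by
    rw [hypergeomMoment, mul_sum, Nat.cast_sum, mul_sum]
    refine sum_congr rfl fun l hl => ?_
    simp only [mem_Icc] at hl
    have h := congrArg (Nat.cast : ℕ → K)
      (Nat.choose_mul_choose_mul_choose_sub (m := m) (hl.2 : l ≤ k) (by omega : l ≤ n))
    push_cast at h ⊢
    linear_combination (l : K) ^ p * h
  field_simp
  linear_combination x k * key

/-- Let `1 ≤ i < n−3`.  Then for every `N` there exist `m ≥ N` with `m > n` and rationals
`q₁, …, q_m` such that (i) `Σ_{k=1}^{m} C(m,k)·k^j·q_k = 0` for every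
`j ∈ {1, …, n} \ {i}`, and (ii)
`Σ_{l=1}^{n} C(n,l)·l^{i+3}·( Σ_{j=0}^{m−n} C(m−n,j)·q_{l+j} ) ≠ 0`. -/
theorem stmt8 (n i : ℕ) (hi : 1 ≤ i) (hin : i < n - 3) :
    ∀ N : ℕ, ∃ m : ℕ, ∃ q : ℕ → ℚ, N ≤ m ∧ n < m ∧
      (∀ j : ℕ, 1 ≤ j → j ≤ n → j ≠ i →
        ∑ k ∈ Finset.Icc 1 m, (m.choose k : ℚ) * (k : ℚ) ^ j * q k = 0) ∧
      (∑ l ∈ Finset.Icc 1 n, (n.choose l : ℚ) * (l : ℚ) ^ (i + 3) *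
        (∑ j ∈ Finset.range (m - n + 1), ((m - n).choose j : ℚ) * q (l + j)) ≠ 0) := by
  intro N
  obtain ⟨x, hx_supp, hx⟩ := exists_sum_eval_mul_eq_coeff (K := ℚ) n i
  obtain ⟨m, hm, hNm, hnm⟩ := ((frequently_sum_hypergeomMoment_mul_ne_zero hx hi
    (by omega : i < i + 3) (by omega)).and_eventually
      ((eventually_ge_atTop N).and (eventually_ge_atTop (2 * n)))).exists
  refine ⟨m, fun k => x k / m.choose k, hNm, by omega, fun j hj hjn hji => ?_, ?_⟩
  · rw [sum_choose_mul_pow_mul_div_choose x hx_supp (by omega)]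
    simpa [coeff_X_pow, Ne.symm hji] using hx (X ^ j) (by rwa [natDegree_X_pow])
      (by rw [eval_pow, eval_X, zero_pow (by omega)])
  · rw [sum_choose_mul_pow_mul_sum_choose_div_choose _ x hx_supp (by omega)]
    exact div_ne_zero hm (Nat.cast_ne_zero.2 (Nat.choose_pos (by omega)).ne')
end
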